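/- arXiv:math/0610816 — 2 statements merged into one kernel-verified Lean document; each statement's English description precedes it below -/
import Mathlib

section
/- Let G₁ and G₂ be groups, G = G₁ * G₂ their free product with canonical injections ι₁, ι₂, let M be a unital complex algebra, α an action of G on M by algebra automorphisms, and E_M the canonical conditional expectation on 𝕄 = M ⋊_α G. For k = 1, 2 let A_k ⊆ 𝕄 be the subalgebra of elements supported on ι_k(G_k). Then A₁ and A₂ are free with amalgamation over M with respect to E_M: for every n ≥ 1, every sequence of indices i₁, …, iₙ ∈ {1,2} with i_j ≠ i_{j+1} for 1 ≤ j < n, and every x_j ∈ A_{i_j} with E_M(x_j) = 0 for all j, one has E_M(x₁x₂⋯xₙ) = 0. -/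
open Finsupp

noncomputable section

variable {M : Type*} [Ring M] [Algebra ℂ M] {G : Type*} [Group G]

/-- The algebraic crossed product `M ⋊_α G`: finitely supported functions `G →₀ M`,
with multiplication determined by `(m u_g)(m' u_h) = (m · α_g(m')) u_{gh}`. -/
def CrossedProduct {M : Type*} [Ring M] [Algebra ℂ M] {G : Type*} [Group G]
    (_α : G →* (M ≃ₐ[ℂ] M)) : Type _ := G →₀ M

namespace CrossedProduct

variable (α : G →* (M ≃ₐ[ℂ] M))

/-- Reinterpret an element of the crossed product as a finitely supported function. -/
def toF (x : CrossedProduct α) : G →₀ M := x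

/-- Build an element of the crossed product from a finitely supported function. -/
def ofF (x : G →₀ M) : CrossedProduct α := x

instance : AddCommGroup (CrossedProduct α) := inferInstanceAs (AddCommGroup (G →₀ M))
instance : Module ℂ (CrossedProduct α) := inferInstanceAs (Module ℂ (G →₀ M))

@[simp] lemma toF_add (x y : CrossedProduct α) : toF α (x + y) = toF α x + toF α y := rfl
@[simp] lemma toF_zero : toF α (0 : CrossedProduct α) = 0 := rfl
@[simp] lemma toF_smul (c : ℂ) (x : CrossedProduct α) : toF α (c • x) = c • toF α x := rfl
@[simp] lemma ofF_add (f g : G →₀ M) : ofF α (f + g) = ofF α f + ofF α g := rfl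
lemma toF_injective : Function.Injective (toF α) := fun _ _ h => h
@[simp] lemma toF_ofF (f : G →₀ M) : toF α (ofF α f) = f := rfl
@[simp] lemma ofF_zero : ofF α (0 : G →₀ M) = 0 := rfl

instance : Mul (CrossedProduct α) :=
  ⟨fun x y => ofF α ((toF α x).sum fun g m => (toF α y).sum fun h n =>
      Finsupp.single (g * h) (m * α g n))⟩

lemma toF_mul (x y : CrossedProduct α) :
    toF α (x * y) = (toF α x).sum fun g m => (toF α y).sum fun h n =>
      Finsupp.single (g * h) (m * α g n) := rfl

instance : One (CrossedProduct α) := ⟨ofF α (Finsupp.single 1 1)⟩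

lemma toF_one : toF α (1 : CrossedProduct α) = Finsupp.single 1 1 := rfl

lemma ofF_single_mul (g h : G) (m n : M) :
    ofF α (Finsupp.single g m) * ofF α (Finsupp.single h n)
      = ofF α (Finsupp.single (g * h) (m * α g n)) := by
  apply toF_injective
  rw [toF_mul, toF_ofF, toF_ofF, toF_ofF]
  rw [Finsupp.sum_single_index (by simp), Finsupp.sum_single_index (by simp)]

private lemma mul_add' (x y z : CrossedProduct α) : x * (y + z) = x * y + x * z := by
  apply toF_injective
  rw [toF_add, toF_mul, toF_mul, toF_mul, ← Finsupp.sum_add]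
  refine Finsupp.sum_congr fun g _ => ?_
  rw [toF_add, Finsupp.sum_add_index' (fun h => by simp) (fun h n₁ n₂ => by
    simp [mul_add, Finsupp.single_add])]

private lemma add_mul' (x y z : CrossedProduct α) : (x + y) * z = x * z + y * z := by
  apply toF_injective
  rw [toF_add, toF_mul, toF_mul, toF_mul, toF_add]
  rw [Finsupp.sum_add_index' (fun g => by simp) (fun g m₁ m₂ => by
    rw [← Finsupp.sum_add]
    exact Finsupp.sum_congr fun h _ => by simp [add_mul, Finsupp.single_add])]

private lemma zero_mul' (x : CrossedProduct α) : 0 * x = 0 := by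
  apply toF_injective
  rw [toF_mul, toF_zero, Finsupp.sum_zero_index]

private lemma mul_zero' (x : CrossedProduct α) : x * 0 = 0 := by
  apply toF_injective
  rw [toF_mul, toF_zero]
  simp [Finsupp.sum_zero_index]

private lemma one_mul' (x : CrossedProduct α) : 1 * x = x := by
  apply toF_injective
  rw [toF_mul, toF_one, Finsupp.sum_single_index (by simp)]
  calc (toF α x).sum (fun h n => Finsupp.single ((1:G) * h) ((1:M) * (α 1) n))
      = (toF α x).sum (fun h n => Finsupp.single h n) :=
        Finsupp.sum_congr fun h _ => by simp
    _ = toF α x := Finsupp.sum_single _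

private lemma mul_one' (x : CrossedProduct α) : x * 1 = x := by
  apply toF_injective
  rw [toF_mul, toF_one]
  have : ∀ g : G, ∀ m : M,
      (Finsupp.single (1 : G) (1 : M)).sum (fun h n => Finsupp.single (g * h) (m * α g n))
        = Finsupp.single g m := by
    intro g m
    rw [Finsupp.sum_single_index (by simp)]
    simp
  calc (toF α x).sum (fun g m => (Finsupp.single (1:G) (1:M)).sum fun h n =>
          Finsupp.single (g * h) (m * α g n))
      = (toF α x).sum (fun g m => Finsupp.single g m) :=
        Finsupp.sum_congr fun g _ => this g _
    _ = toF α x := Finsupp.sum_single _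

private lemma mul_assoc' (x y z : CrossedProduct α) : x * y * z = x * (y * z) := by
  have hx : x = ofF α (toF α x) := rfl
  have hy : y = ofF α (toF α y) := rfl
  have hz : z = ofF α (toF α z) := rfl
  rw [hx, hy, hz]
  generalize (toF α x) = f
  generalize (toF α y) = g
  generalize (toF α z) = h
  induction f using Finsupp.induction_linear with
  | zero => rw [ofF_zero α, zero_mul' α, zero_mul' α, zero_mul' α]
  | add f₁ f₂ ih₁ ih₂ => rw [ofF_add, add_mul' α, add_mul' α, add_mul' α, ih₁, ih₂]
  | single a b =>
    induction g using Finsupp.induction_linear with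
    | zero => rw [ofF_zero α, mul_zero' α, zero_mul' α, mul_zero' α]
    | add g₁ g₂ ih₁ ih₂ => rw [ofF_add, mul_add' α, add_mul' α, add_mul' α, mul_add' α, ih₁, ih₂]
    | single c d =>
      induction h using Finsupp.induction_linear with
      | zero => rw [ofF_zero α, mul_zero' α, mul_zero' α, mul_zero' α]
      | add h₁ h₂ ih₁ ih₂ => rw [ofF_add, mul_add' α, mul_add' α, mul_add' α, ih₁, ih₂]
      | single e s =>
        rw [ofF_single_mul, ofF_single_mul, ofF_single_mul, ofF_single_mul]
        simp [mul_assoc, map_mul, AlgEquiv.mul_apply]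

instance : Ring (CrossedProduct α) where
  __ := (inferInstance : AddCommGroup (CrossedProduct α))
  left_distrib := mul_add' α
  right_distrib := fun a b c => add_mul' α a b c
  zero_mul := zero_mul' α
  mul_zero := mul_zero' α
  mul_assoc := mul_assoc' α
  one_mul := one_mul' α
  mul_one := mul_one' α

instance : Algebra ℂ (CrossedProduct α) :=
  Algebra.ofModule
    (fun c x y => by
      apply toF_injective
      simp only [toF_mul, toF_smul]
      rw [Finsupp.sum_smul_index' (fun g => by simp), Finsupp.smul_sum]
      refine Finsupp.sum_congr fun g _ => ?_
      rw [Finsupp.smul_sum]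
      exact Finsupp.sum_congr fun h _ => by
        rw [smul_mul_assoc, Finsupp.smul_single])
    (fun c x y => by
      apply toF_injective
      simp only [toF_mul, toF_smul]
      rw [Finsupp.smul_sum]
      refine Finsupp.sum_congr fun g _ => ?_
      rw [Finsupp.smul_sum, Finsupp.sum_smul_index' (fun h => by simp)]
      exact Finsupp.sum_congr fun h _ => by
        rw [map_smul, mul_smul_comm, Finsupp.smul_single])

/-- The element `m u_g` of the crossed product. -/
def single (g : G) (m : M) : CrossedProduct α := ofF α (Finsupp.single g m)

/-- The coefficient of `x ∈ M ⋊_α G` at a group element `g`. -/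
def coeff (x : CrossedProduct α) (g : G) : M := toF α x g

/-- The canonical conditional expectation `E_M : M ⋊_α G → M`, reading off
the coefficient at the group identity. -/
def E : CrossedProduct α →ₗ[ℂ] M where
  toFun x := coeff α x 1
  map_add' x y := by simp [coeff]
  map_smul' c x := by simp [coeff]

@[simp] lemma E_apply (x : CrossedProduct α) : E α x = coeff α x 1 := rfl

end CrossedProduct

/-- `suppIn α S x` : the element `x` of the crossed product is supported on the subset `S ⊆ G`. -/
def CrossedProduct.suppIn {M : Type*} [Ring M] [Algebra ℂ M] {G : Type*} [Group G]
    (α : G →* (M ≃ₐ[ℂ] M)) (S : Set G) (x : CrossedProduct α) : Prop :=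
  ∀ g : G, g ∉ S → CrossedProduct.coeff α x g = 0

open Finsupp Monoid


/-!
The coefficient of `x₁ ⋯ xₙ` at `g` vanishes unless `g = g₁ ⋯ gₙ` with each `gⱼ` in the support
of `xⱼ`. Centering removes the identity from these supports, so each `gⱼ` is a nontrivial element
of the factor `ι_{iⱼ}(G_{iⱼ})`; the indices alternate, so `g₁ ⋯ gₙ` is a nonempty reduced word and
hence `≠ 1` by the normal form theorem for free products. Thus the coefficient at `1`, which is
`E_M(x₁ ⋯ xₙ)`, vanishes.
-/

open Monoid Pointwise

lemma Monoid.CoprodI.list_prod_ne_one {ι : Type*} {N : ι → Type*} [∀ i, Monoid (N i)]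
    {l : List (Σ i, N i)} (hne : l ≠ []) (h1 : ∀ a ∈ l, a.2 ≠ 1)
    (hchain : l.IsChain fun a b => a.1 ≠ b.1) : (l.map fun a => of a.2).prod ≠ 1 := by
  classical
  intro h
  have hw : (⟨l, h1, hchain⟩ : CoprodI.Word N) = .empty :=
    CoprodI.Word.equiv.symm.injective (h.trans CoprodI.Word.prod_empty.symm)
  exact hne (congrArg CoprodI.Word.toList hw)

namespace Monoid.Coprod

universe u₁ u₂

variable (G₁ : Type u₁) (G₂ : Type u₂) [Group G₁] [Group G₂]

/-- `ULift` brings both factors into one universe, so that `G₁ ∗ G₂` maps to an indexed free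
product, where reduced words are available. -/
def Summand : Fin 2 → Type (max u₁ u₂)
  | 0 => ULift G₁
  | 1 => ULift G₂

instance : ∀ k, Group (Summand G₁ G₂ k)
  | 0 => inferInstanceAs (Group (ULift G₁))
  | 1 => inferInstanceAs (Group (ULift G₂))

def toCoprodI : Coprod G₁ G₂ →* CoprodI (Summand G₁ G₂) :=
  lift (CoprodI.of.comp (MulEquiv.ulift.symm.toMonoidHom : G₁ →* Summand G₁ G₂ 0))
    (CoprodI.of.comp (MulEquiv.ulift.symm.toMonoidHom : G₂ →* Summand G₁ G₂ 1))

def summandRange (k : Fin 2) : Set (Coprod G₁ G₂) :=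
  if k = 0 then Set.range (inl : G₁ →* Coprod G₁ G₂) else Set.range (inr : G₂ →* Coprod G₁ G₂)

variable {G₁ G₂}

lemma exists_toCoprodI_eq_of {k : Fin 2} {g : Coprod G₁ G₂}
    (hg : g ∈ summandRange G₁ G₂ k \ {1}) :
    ∃ a : Summand G₁ G₂ k, a ≠ 1 ∧ toCoprodI G₁ G₂ g = CoprodI.of a := by
  obtain ⟨hg, hg1 : g ≠ 1⟩ := hg
  match k with
  | 0 =>
    obtain ⟨a, rfl⟩ : g ∈ Set.range inl := hg
    exact ⟨ULift.up a, fun h => hg1 (by simp [show a = 1 from congrArg ULift.down h]), rfl⟩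
  | 1 =>
    obtain ⟨a, rfl⟩ : g ∈ Set.range inr := hg
    exact ⟨ULift.up a, fun h => hg1 (by simp [show a = 1 from congrArg ULift.down h]), rfl⟩

theorem prod_ofFn_ne_one {n : ℕ} (hn : 0 < n) (i : Fin n → Fin 2)
    (halt : ∀ j : Fin n, (h : (j : ℕ) + 1 < n) → i j ≠ i ⟨(j : ℕ) + 1, h⟩)
    (g : Fin n → Coprod G₁ G₂) (hg : ∀ j, g j ∈ summandRange G₁ G₂ (i j) \ {1}) :
    (List.ofFn g).prod ≠ 1 := by
  choose a ha1 ha using fun j => exists_toCoprodI_eq_of (hg j)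
  have himage : toCoprodI G₁ G₂ (List.ofFn g).prod =
      ((List.ofFn fun j => (⟨i j, a j⟩ : Σ k, Summand G₁ G₂ k)).map
        fun a => CoprodI.of a.2).prod := by
    simp [map_list_prod, List.map_ofFn, Function.comp_def, ha]
  refine fun h => CoprodI.list_prod_ne_one ?_ ?_ ?_ (himage.symm.trans (by rw [h, map_one]))
  · simpa using hn.ne'
  · simpa [List.mem_ofFn] using ha1
  · exact List.isChain_ofFn.mpr fun j hj => halt ⟨j, by omega⟩ hj

end Monoid.Coprod

namespace CrossedProduct

variable {α : G →* (M ≃ₐ[ℂ] M)}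

lemma suppIn_one : suppIn α 1 1 := fun _ hg => Finsupp.single_eq_of_ne hg

lemma suppIn.mem_of_mem_support {S : Set G} {x : CrossedProduct α} (hx : suppIn α S x) {g : G}
    (hg : g ∈ (toF α x).support) : g ∈ S :=
  not_not.mp fun h => Finsupp.mem_support_iff.mp hg (hx g h)

lemma suppIn.mul {S T : Set G} {x y : CrossedProduct α} (hx : suppIn α S x) (hy : suppIn α T y) :
    suppIn α (S * T) (x * y) := by
  intro g hg
  rw [coeff, toF_mul, Finsupp.sum_apply, Finsupp.sum]
  refine Finset.sum_eq_zero fun g₁ hg₁ => ?_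
  rw [Finsupp.sum_apply, Finsupp.sum]
  exact Finset.sum_eq_zero fun g₂ hg₂ => Finsupp.single_eq_of_ne' fun h =>
    hg (h ▸ Set.mul_mem_mul (hx.mem_of_mem_support hg₁) (hy.mem_of_mem_support hg₂))

lemma suppIn_prod_ofFn {n : ℕ} (S : Fin n → Set G) (x : Fin n → CrossedProduct α)
    (hx : ∀ j, suppIn α (S j) (x j)) : suppIn α (List.ofFn S).prod (List.ofFn x).prod := by
  induction n with
  | zero => exact suppIn_one
  | succ n ih =>
    rw [List.ofFn_succ, List.ofFn_succ, List.prod_cons, List.prod_cons]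
    exact (hx 0).mul (ih _ _ fun j => hx j.succ)

lemma suppIn.diff_one {S : Set G} {x : CrossedProduct α} (hx : suppIn α S x) (hE : E α x = 0) :
    suppIn α (S \ {1}) x := fun g hg => by
  by_cases h1 : g = 1
  · exact h1 ▸ hE
  · exact hx g fun hS => hg ⟨hS, h1⟩

end CrossedProduct

/-- for `G = G₁ * G₂` a free product of groups, the subalgebras `A₁, A₂` of
`M ⋊_α G` of elements supported on `ι₁(G₁)`, resp. `ι₂(G₂)`, are free with amalgamation over `M`
with respect to `E_M`: every alternating product of `E_M`-centered elements is `E_M`-centered. -/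
theorem crossedProduct_coprod_amalgamatedFree {M : Type*} [Ring M] [Algebra ℂ M]
    {G₁ G₂ : Type*} [Group G₁] [Group G₂]
    (α : Monoid.Coprod G₁ G₂ →* (M ≃ₐ[ℂ] M))
    (n : ℕ) (hn : 1 ≤ n) (i : Fin n → Fin 2)
    (halt : ∀ j : Fin n, (h : (j : ℕ) + 1 < n) → i j ≠ i ⟨(j : ℕ) + 1, h⟩)
    (x : Fin n → CrossedProduct α)
    (hsupp : ∀ j, CrossedProduct.suppIn α
      (if i j = 0
        then Set.range ⇑(Monoid.Coprod.inl : G₁ →* Monoid.Coprod G₁ G₂)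
        else Set.range ⇑(Monoid.Coprod.inr : G₂ →* Monoid.Coprod G₁ G₂)) (x j))
    (hE : ∀ j, CrossedProduct.E α (x j) = 0) :
    CrossedProduct.E α (List.ofFn x).prod = 0 := by
  have hprod := CrossedProduct.suppIn_prod_ofFn _ x fun j => (hsupp j).diff_one (hE j)
  refine hprod 1 fun h1 => ?_
  obtain ⟨g, hg⟩ := Set.mem_prod_list_ofFn.mp h1
  exact Coprod.prod_ofFn_ne_one hn i halt (fun j => (g j : Coprod G₁ G₂)) (fun j => (g j).2) hg
end
end

section
/- Let N = k₁ + k₂ with k₁, k₂ ≥ 1, let F_N be the free group on N generators x₁, …, x_N, let M be a unital complex algebra, α an action of F_N on M by algebra automorphisms, and E_M the canonical conditional expectation on M ⋊_α F_N. Let H₁ = ⟨x₁, …, x_{k₁}⟩ and H₂ = ⟨x_{k₁+1}, …, x_N⟩ be the subgroups generated by the first k₁ and the remaining k₂ generators, and for i = 1, 2 let A_i be the subalgebra of elements supported on H_i. Then A₁ and A₂ are free with amalgamation over M with respect to E_M: for every n ≥ 1, every sequence of indices i₁, …, iₙ ∈ {1,2} with i_j ≠ i_{j+1} for 1 ≤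 j < n, and every x_j ∈ A_{i_j} with E_M(x_j) = 0 for all j, one has E_M(x₁x₂⋯xₙ) = 0. (This is the freeness underlying L_M(F_N) = L_M(F_{k₁}) *_M L_M(F_{k₂}).) -/
/-!
Colouring the generators splits `F_N` as the free product `F_{k₁} * F_{k₂}`, so an alternating
product of nontrivial elements of `H₁` and `H₂` is a nonempty reduced word, hence `≠ e`.
The coefficient of `x₁ ⋯ xₙ` at `e` only collects the terms `m₁ u_{g₁} ⋯ mₙ u_{gₙ}` with
`gⱼ` in the support of `xⱼ`; since `E_M(xⱼ) = 0`, every such `gⱼ` is a nontrivial element of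
`H_{iⱼ}`, so `g₁ ⋯ gₙ ≠ e` and the coefficient vanishes.
-/

open Finsupp

noncomputable section

variable {M : Type*} [Ring M] [Algebra ℂ M] {G : Type*} [Group G]

/-- Equivalently, the subgroups generate their free product inside `G`. -/
def Subgroup.FreelyIndependent {ι G : Type*} [Group G] (K : ι → Subgroup G) : Prop :=
  ∀ (n : ℕ) (i : Fin (n + 1) → ι) (g : Fin (n + 1) → G),
    (∀ j : Fin n, i j.castSucc ≠ i j.succ) → (∀ j, g j ∈ K (i j)) → (∀ j, g j ≠ 1) →
      (List.ofFn g).prod ≠ 1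

namespace Monoid.CoprodI

variable {ι : Type*} {H : ι → Type*} [∀ i, Group (H i)]

theorem NeWord.prod_ne_one {i j : ι} (w : NeWord H i j) : w.prod ≠ 1 := by
  classical
  intro h
  have hw : w.toWord = Word.empty := Word.equiv.symm.injective (h.trans Word.prod_empty.symm)
  exact w.toList_ne_nil (congrArg Word.toList hw)

theorem exists_neWord_prod_eq_prod_ofFn {n : ℕ} (i : Fin (n + 1) → ι) (m : ∀ j, H (i j))
    (halt : ∀ j : Fin n, i j.castSucc ≠ i j.succ) (hm : ∀ j, m j ≠ 1) :
    ∃ w : NeWord H (i 0) (i (Fin.last n)), w.prod = (List.ofFn fun j => of (m j)).prod := by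
  induction n with
  | zero => exact ⟨.singleton (m 0) (hm 0), by simp [List.ofFn_succ]⟩
  | succ n ih =>
    obtain ⟨w, hw⟩ := ih (i ∘ Fin.succ) (fun j => m j.succ)
      (fun j => by simpa only [Function.comp_apply, Fin.succ_castSucc] using halt j.succ)
      (fun j => hm j.succ)
    refine ⟨.append (.singleton (m 0) (hm 0)) (by simpa using halt 0) w, ?_⟩
    rw [NeWord.append_prod, NeWord.prod_singleton, hw]
    conv_rhs => rw [List.ofFn_succ, List.prod_cons]

theorem freelyIndependent_range_of_lift_injective {G : Type*} [Group G] (f : ∀ i, H i →* G)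
    (hf : Function.Injective (lift f)) : Subgroup.FreelyIndependent fun i => (f i).range := by
  intro n i g halt hg hne hprod
  choose m hm using hg
  obtain ⟨w, hw⟩ := exists_neWord_prod_eq_prod_ofFn i m halt
    fun j h => hne j (by rw [← hm j, h, map_one])
  refine w.prod_ne_one (hf ?_)
  rw [hw, map_list_prod, List.map_ofFn, map_one, ← hprod]
  congr 2
  funext j
  simp [hm j]

end Monoid.CoprodI

open Monoid in
def FreeGroup.mulEquivCoprodIFiber {ι κ : Type*} (c : ι → κ) :
    FreeGroup ι ≃* CoprodI fun b => FreeGroup (c ⁻¹' {b}) :=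
  MonoidHom.toMulEquiv (FreeGroup.lift fun t => CoprodI.of (i := c t) (FreeGroup.of ⟨t, rfl⟩))
    (CoprodI.lift fun _ => FreeGroup.lift fun s => FreeGroup.of s.1)
    (by ext; simp)
    (by
      ext b ⟨t, ht⟩
      obtain rfl : c t = b := ht
      simp)

theorem FreeGroup.freelyIndependent_closure_image_preimage {ι κ : Type*} (c : ι → κ) :
    Subgroup.FreelyIndependent fun b => Subgroup.closure (FreeGroup.of '' (c ⁻¹' {b})) := by
  have hrange (b : κ) : (FreeGroup.lift fun s : c ⁻¹' {b} => FreeGroup.of s.1).range =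
      Subgroup.closure (FreeGroup.of '' (c ⁻¹' {b})) := by
    rw [FreeGroup.range_lift_eq_closure, Set.image_eq_range]
  simp_rw [← hrange]
  exact Monoid.CoprodI.freelyIndependent_range_of_lift_injective _
    (FreeGroup.mulEquivCoprodIFiber c).symm.injective

namespace CrossedProduct

variable (α : G →* (M ≃ₐ[ℂ] M))

theorem exists_mul_eq_of_coeff_mul_ne_zero {x y : CrossedProduct α} {g : G}
    (h : coeff α (x * y) g ≠ 0) :
    ∃ a b : G, coeff α x a ≠ 0 ∧ coeff α y b ≠ 0 ∧ a * b = g := by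
  by_contra! hcon
  refine h ?_
  change toF α (x * y) g = 0
  simp only [toF_mul, Finsupp.sum_apply]
  refine Finset.sum_eq_zero fun a ha => ?_
  refine Finset.sum_eq_zero fun b hb => ?_
  exact Finsupp.single_eq_of_ne (hcon a b (mem_support_iff.mp ha) (mem_support_iff.mp hb)).symm

theorem exists_prod_eq_of_coeff_prod_ne_zero {n : ℕ} {x : Fin n → CrossedProduct α} {g : G}
    (h : coeff α (List.ofFn x).prod g ≠ 0) :
    ∃ gs : Fin n → G, (∀ j, coeff α (x j) (gs j) ≠ 0) ∧ (List.ofFn gs).prod = g := by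
  induction n generalizing g with
  | zero =>
    refine ⟨Fin.elim0, fun j => j.elim0, ?_⟩
    by_contra hg
    exact h (Finsupp.single_eq_of_ne (by simpa [eq_comm] using hg))
  | succ n ih =>
    rw [List.ofFn_succ, List.prod_cons] at h
    obtain ⟨a, b, ha, hb, rfl⟩ := exists_mul_eq_of_coeff_mul_ne_zero α h
    obtain ⟨gs, hgs, rfl⟩ := ih hb
    exact ⟨Fin.cons a gs, Fin.cases ha hgs, by simp [List.ofFn_succ]⟩

theorem E_prod_eq_zero_of_freelyIndependent {ι : Type*} {K : ι → Subgroup G}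
    (hK : Subgroup.FreelyIndependent K) {n : ℕ} (i : Fin (n + 1) → ι)
    (halt : ∀ j : Fin n, i j.castSucc ≠ i j.succ) (x : Fin (n + 1) → CrossedProduct α)
    (hsupp : ∀ j, suppIn α (K (i j)) (x j)) (hE : ∀ j, E α (x j) = 0) :
    E α (List.ofFn x).prod = 0 := by
  by_contra h
  obtain ⟨gs, hgs, hprod⟩ := exists_prod_eq_of_coeff_prod_ne_zero α h
  refine hK n i gs halt (fun j => ?_) (fun j h1 => hgs j ?_) hprod
  · by_contra hj
    exact hgs j (hsupp j _ hj)
  · rw [h1, ← E_apply, hE]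

end CrossedProduct

theorem crossedProduct_freeGroup_split_amalgamatedFree_general {M : Type*} [Ring M] [Algebra ℂ M]
    (k₁ k₂ : ℕ)
    (α : FreeGroup (Fin (k₁ + k₂)) →* (M ≃ₐ[ℂ] M))
    (n : ℕ) (hn : 1 ≤ n) (i : Fin n → Fin 2)
    (halt : ∀ j : Fin n, (h : (j : ℕ) + 1 < n) → i j ≠ i ⟨(j : ℕ) + 1, h⟩)
    (x : Fin n → CrossedProduct α)
    (hsupp : ∀ j, CrossedProduct.suppIn α
      ((if i j = 0
        then Subgroup.closure (FreeGroup.of '' {t : Fin (k₁ + k₂) | (t : ℕ) < k₁})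
        else Subgroup.closure (FreeGroup.of '' {t : Fin (k₁ + k₂) | k₁ ≤ (t : ℕ)}) :
          Subgroup (FreeGroup (Fin (k₁ + k₂)))) : Set _) (x j))
    (hE : ∀ j, CrossedProduct.E α (x j) = 0) :
    CrossedProduct.E α (List.ofFn x).prod = 0 := by
  obtain ⟨n, rfl⟩ : ∃ m, n = m + 1 := ⟨n - 1, by omega⟩
  let c : Fin (k₁ + k₂) → Fin 2 := fun t => if (t : ℕ) < k₁ then 0 else 1
  have hK : (fun b : Fin 2 => if b = 0
      then Subgroup.closure (FreeGroup.of '' {t : Fin (k₁ + k₂) | (t : ℕ) < k₁})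
      else Subgroup.closure (FreeGroup.of '' {t : Fin (k₁ + k₂) | k₁ ≤ (t : ℕ)})) =
      fun b => Subgroup.closure (FreeGroup.of '' (c ⁻¹' {b})) := by
    funext b
    fin_cases b <;> simp [c, Set.preimage, not_lt]
  exact CrossedProduct.E_prod_eq_zero_of_freelyIndependent α
    (hK ▸ FreeGroup.freelyIndependent_closure_image_preimage c) i
    (fun j => halt j.castSucc (by simp)) x hsupp hE

/-- for `N = k₁ + k₂`, the subalgebras of `M ⋊_α F_N` of elements supported on the
subgroup generated by the first `k₁` generators, resp. by the remaining `k₂` generators, are free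
with amalgamation over `M` with respect to `E_M`: every alternating product of `E_M`-centered
elements is `E_M`-centered. -/
theorem crossedProduct_freeGroup_split_amalgamatedFree {M : Type*} [Ring M] [Algebra ℂ M]
    (k₁ k₂ : ℕ) (hk₁ : 1 ≤ k₁) (hk₂ : 1 ≤ k₂)
    (α : FreeGroup (Fin (k₁ + k₂)) →* (M ≃ₐ[ℂ] M))
    (n : ℕ) (hn : 1 ≤ n) (i : Fin n → Fin 2)
    (halt : ∀ j : Fin n, (h : (j : ℕ) + 1 < n) → i j ≠ i ⟨(j : ℕ) + 1, h⟩)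
    (x : Fin n → CrossedProduct α)
    (hsupp : ∀ j, CrossedProduct.suppIn α
      ((if i j = 0
        then Subgroup.closure (FreeGroup.of '' {t : Fin (k₁ + k₂) | (t : ℕ) < k₁})
        else Subgroup.closure (FreeGroup.of '' {t : Fin (k₁ + k₂) | k₁ ≤ (t : ℕ)}) :
          Subgroup (FreeGroup (Fin (k₁ + k₂)))) : Set _) (x j))
    (hE : ∀ j, CrossedProduct.E α (x j) = 0) :
    CrossedProduct.E α (List.ofFn x).prod = 0 :=
  crossedProduct_freeGroup_split_amalgamatedFree_general k₁ k₂ α n hn i halt x hsupp hE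
end
end
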